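/- arXiv:2406.00738 — 2 statements merged into one kernel-verified Lean document; each statement's English description precedes it below -/
import Mathlib

section
/- Let N ≥ 1 and suppose each per-arm transition kernel satisfies P_i(σ,1,1) ≥ P_i(σ,0,1) for every σ ∈ {0,1}. Fix a state s ∈ {0,1}^N. If V : {0,1}^N → ℝ is submodular, then the map a ↦ Σ_{s' ∈ {0,1}^N} P(s,a,s') V(s') is submodular in the action a. -/
/-!
Each arm admits a monotone coupling: since `P i σ 0 1 ≤ P i σ 1 1`, the next state of arm `i`
under action `α` can be drawn as `φ α`, where `φ` is a random monotone map `Bool → Bool`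
(constantly `true`, the identity, or constantly `false`) whose law does not depend on `α`.
Drawing the maps independently across arms, the expectation becomes a nonnegative combination
of `V ∘ Φ` with `Φ` a coordinatewise monotone map of the cube. Such a `Φ` preserves `⊔` and `⊓`,
so each `V ∘ Φ` is submodular, and hence so is the combination.
-/

/-- Joint transition probability: product of per-arm kernels. -/
def jointP {N : ℕ} (P : Fin N → Bool → Bool → Bool → ℝ)
    (s a s' : Fin N → Bool) : ℝ :=
  ∏ i, P i (s i) (a i) (s' i)

/-- Submodularity of a function on the Boolean cube (with coordinatewise ⊔, ⊓). -/
def Submod {N : ℕ} (f : (Fin N → Bool) → ℝ) : Prop :=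
  ∀ x y, f (x ⊔ y) + f (x ⊓ y) ≤ f x + f y

open Finset

def LatticeHom.piMap {ι α β : Type*} [LinearOrder α] [Lattice β] (φ : ι → α →o β) :
    LatticeHom (ι → α) (ι → β) where
  toFun a i := φ i (a i)
  map_sup' a b := funext fun i => map_sup (φ i) (a i) (b i)
  map_inf' a b := funext fun i => map_inf (φ i) (a i) (b i)

namespace Submod

variable {N : ℕ}

theorem comp_latticeHom {V : (Fin N → Bool) → ℝ} (hV : Submod V)
    (φ : LatticeHom (Fin N → Bool) (Fin N → Bool)) : Submod (V ∘ φ) := fun x y => by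
  simpa only [Function.comp_apply, map_sup, map_inf] using hV (φ x) (φ y)

theorem sum_mul {κ : Type*} [Fintype κ] {w : κ → ℝ} {f : κ → (Fin N → Bool) → ℝ}
    (hw : ∀ k, 0 ≤ w k) (hf : ∀ k, Submod (f k)) :
    Submod (fun a => ∑ k, w k * f k a) := fun x y => by
  simp only [← sum_add_distrib, ← mul_add]
  exact sum_le_sum fun k _ => mul_le_mul_of_nonneg_left (hf k x y) (hw k)

end Submod

def boolMonotoneMaps : Fin 3 → Bool →o Bool :=
  ![OrderHom.const Bool true, OrderHom.id, OrderHom.const Bool false]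

def couplingWeights (q : Bool → Bool → ℝ) : Fin 3 → ℝ :=
  ![q false true, q true true - q false true, q true false]

theorem couplingWeights_nonneg {q : Bool → Bool → ℝ} (hq : ∀ x y, 0 ≤ q x y)
    (hmono : q false true ≤ q true true) (k : Fin 3) : 0 ≤ couplingWeights q k := by
  fin_cases k
  · exact hq _ _
  · exact sub_nonneg.2 hmono
  · exact hq _ _

theorem eq_sum_couplingWeights {q : Bool → Bool → ℝ} (hq : ∀ x, q x false + q x true = 1)
    (x y : Bool) :
    q x y = ∑ k, couplingWeights q k * if boolMonotoneMaps k x = y then 1 else 0 := by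
  cases x <;> cases y <;> simp only [couplingWeights, boolMonotoneMaps,
    Fin.sum_univ_three, Matrix.cons_val_zero, Matrix.cons_val_one, Matrix.cons_val,
    OrderHom.const_coe_coe, OrderHom.id_coe, Function.const_apply, id_eq, Bool.true_eq_false,
    Bool.false_eq_true, ↓reduceIte, mul_zero, mul_one, zero_add, add_zero, add_sub_cancel]
  linarith [hq false, hq true]

theorem sum_prod_mul_eq_sum_mixture {ι κ α β : Type*} [Fintype ι] [DecidableEq ι] [Fintype κ]
    [Fintype β] [DecidableEq β]
    (q : ι → α → β → ℝ) (w : ι → κ → ℝ) (f : ι → κ → α → β)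
    (hq : ∀ i x y, q i x y = ∑ k, w i k * if f i k x = y then 1 else 0)
    (V : (ι → β) → ℝ) (a : ι → α) :
    ∑ b : ι → β, (∏ i, q i (a i) (b i)) * V b
      = ∑ G : ι → κ, (∏ i, w i (G i)) * V (fun i => f i (G i) (a i)) := by
  have hprod : ∀ b : ι → β, ∏ i, q i (a i) (b i)
      = ∑ G : ι → κ, (∏ i, w i (G i)) * if (fun i => f i (G i) (a i)) = b then 1 else 0 := by
    intro b
    simp_rw [hq, prod_univ_sum, Fintype.piFinset_univ, prod_mul_distrib, prod_boole,
      funext_iff, mem_univ, true_implies]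
  simp_rw [hprod, sum_mul, mul_assoc, ite_mul, one_mul, zero_mul]
  rw [sum_comm]
  simp

theorem stmt_5_general {N : ℕ}
    (P : Fin N → Bool → Bool → Bool → ℝ)
    (hPnonneg : ∀ i σ α σ', 0 ≤ P i σ α σ')
    (hPsum : ∀ i σ α, P i σ α false + P i σ α true = 1)
    (hPmono : ∀ i σ, P i σ false true ≤ P i σ true true)
    (s : Fin N → Bool)
    (V : (Fin N → Bool) → ℝ) (hV : Submod V) :
    Submod (fun a : Fin N → Bool => ∑ s' : Fin N → Bool, jointP P s a s' * V s') := by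
  have hmixture : ∀ a, ∑ s', jointP P s a s' * V s'
      = ∑ G : Fin N → Fin 3, (∏ i, couplingWeights (P i (s i)) (G i)) *
          (V ∘ LatticeHom.piMap fun i => boolMonotoneMaps (G i)) a :=
    sum_prod_mul_eq_sum_mixture _ _ _ (fun i => eq_sum_couplingWeights (hPsum i (s i))) V
  simp only [hmixture]
  exact Submod.sum_mul
    (fun G => prod_nonneg fun i _ => couplingWeights_nonneg (hPnonneg i (s i)) (hPmono i (s i)) _)
    (fun G => hV.comp_latticeHom _)

/-- If the per-arm kernels are stochastically monotone in the action, then the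
one-step expectation of a submodular function is submodular in the action. -/
theorem stmt_5 {N : ℕ} (hN : 1 ≤ N)
    (P : Fin N → Bool → Bool → Bool → ℝ)
    (hPnonneg : ∀ i σ α σ', 0 ≤ P i σ α σ')
    (hPsum : ∀ i σ α, P i σ α false + P i σ α true = 1)
    (hPmono : ∀ i σ, P i σ false true ≤ P i σ true true)
    (s : Fin N → Bool)
    (V : (Fin N → Bool) → ℝ) (hV : Submod V) :
    Submod (fun a : Fin N → Bool => ∑ s' : Fin N → Bool, jointP P s a s' * V s') :=
  stmt_5_general P hPnonneg hPsum hPmono s V hV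
end

section
/- Let N ≥ 1, let γ ∈ [0,1), let K satisfy 1 ≤ K ≤ N, and suppose each per-arm transition kernel satisfies P_i(σ,1,1) ≥ P_i(σ,0,1) for every σ ∈ {0,1}. Fix a state s ∈ {0,1}^N. Suppose V : {0,1}^N → ℝ is monotone, submodular, and nonnegative, and suppose the map a ↦ R(s,a) is monotone, submodular, and nonnegative. Define Q(a) := R(s,a) + γ Σ_{s' ∈ {0,1}^N} P(s,a,s') V(s'). Construct the greedy action â as follows: starting from the empty set of arms, for K rounds add to the current set an arm i not yet chosen that maximizes Q evaluated at the indicator vector of the current set together with i; let â be the indicator vector of the resulting set of K arms. Then Q(â) ≥ (1 − 1/e) · max{ Q(a) : a ∈ {0,1}^N, Σ_i a_i ≤ K }. -/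
/-- Number of arms pulled by a binary action vector. -/
def pulls {N : ℕ} (a : Fin N → Bool) : ℕ := ∑ i, if a i then 1 else 0

/-- Indicator vector of a set of arms. -/
def ind {N : ℕ} (A : Finset (Fin N)) : Fin N → Bool := fun i => decide (i ∈ A)

/-- Greedy selection of arm sets: at each round, add an arm (not yet chosen)
maximizing the value of the current set together with that arm. -/
noncomputable def greedy {N : ℕ} (Q : Finset (Fin N) → ℝ) : ℕ → Finset (Fin N)
  | 0 => ∅
  | k + 1 =>
    let A := greedy Q k
    if h : (Finset.univ \ A).Nonempty then
      insert
        (Classical.choose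
          (Finset.exists_max_image (Finset.univ \ A) (fun i => Q (insert i A)) h)) A
    else A

/-!
Write `ρ i b = P i (s i) b true`. Since the arms move independently, the expected continuation
value `∑ s', jointP P s a s' * V s'` is the multilinear extension of `V` at the point
`(ρ i (a i))ᵢ ∈ [0,1]^N`, i.e. `E[V(X)]` for independent `Xᵢ ~ Bernoulli(ρ i (a i))`. Coupling two
such product measures coordinate by coordinate shows that the multilinear extension of a monotone
submodular function is monotone and submodular on the lattice `[0,1]^N`; as `ρ i` is monotone,
`a ↦ (ρ i (a i))ᵢ` is a lattice homomorphism, so `Q` is monotone, submodular and nonnegative on the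
cube. The bound is then the Nemhauser–Wolsey–Fisher analysis of greedy maximisation: each greedy
step closes at least a `1/K` fraction of the gap to any set of at most `K` arms, and
`(1 - 1/K)^K ≤ 1/e`.
-/

open Finset

lemma Bool.monotone_of_false_le_true {α : Type*} [Preorder α] {φ : Bool → α}
    (h : φ false ≤ φ true) : Monotone φ := by
  intro u v huv
  cases u <;> cases v <;> first | exact le_rfl | exact h | exact absurd huv (by decide)

lemma Submod.add_mul {N : ℕ} {f g : (Fin N → Bool) → ℝ} (hf : Submod f) (hg : Submod g) {c : ℝ}
    (hc : 0 ≤ c) : Submod (fun x => f x + c * g x) := fun x y => by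
  linarith [hf x y, mul_le_mul_of_nonneg_left (hg x y) hc]

lemma Fin.cons_sup_cons {N : ℕ} (u v : Bool) (x y : Fin N → Bool) :
    (Fin.cons u x : Fin (N + 1) → Bool) ⊔ Fin.cons v y = Fin.cons (u ⊔ v) (x ⊔ y) := by
  ext i; cases i using Fin.cases <;> rfl

lemma Fin.cons_inf_cons {N : ℕ} (u v : Bool) (x y : Fin N → Bool) :
    (Fin.cons u x : Fin (N + 1) → Bool) ⊓ Fin.cons v y = Fin.cons (u ⊓ v) (x ⊓ y) := by
  ext i; cases i using Fin.cases <;> rfl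

noncomputable def multilinearExt {N : ℕ} (f : (Fin N → Bool) → ℝ) (p : Fin N → ℝ) : ℝ :=
  ∑ x : Fin N → Bool, (∏ i, if x i then p i else 1 - p i) * f x

lemma multilinearExt_fin_zero (f : (Fin 0 → Bool) → ℝ) (p : Fin 0 → ℝ) :
    multilinearExt f p = f Fin.elim0 := by
  simp [multilinearExt, Subsingleton.elim _ (Fin.elim0 : Fin 0 → Bool)]

lemma multilinearExt_succ {N : ℕ} (f : (Fin (N + 1) → Bool) → ℝ) (p : Fin (N + 1) → ℝ) :
    multilinearExt f p =
      p 0 * multilinearExt (fun x => f (Fin.cons true x)) (p ∘ Fin.succ) +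
        (1 - p 0) * multilinearExt (fun x => f (Fin.cons false x)) (p ∘ Fin.succ) := by
  rw [multilinearExt, ← (Fin.consEquiv fun _ => Bool).sum_comp, Fintype.sum_prod_type,
    Fintype.sum_bool, multilinearExt, multilinearExt, mul_sum, mul_sum]
  simp [Fin.prod_univ_succ, mul_assoc]
  rfl


-- The mass of the first coordinate splits into `a ⊓ b` (both on), `1 - a ⊔ b` (both off) and
-- `|a - b|` (only one on); each part is controlled by one of the hypotheses.
lemma convex_mix_le {a b A₀ A₁ B₀ B₁ H₀ H₁ K₀ K₁ : ℝ} (ha : a ∈ Set.Icc 0 1) (hb : b ∈ Set.Icc 0 1)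
    (h₁₁ : A₁ + B₁ ≤ H₁ + K₁) (h₀₀ : A₀ + B₀ ≤ H₀ + K₀) (h₀₁ : A₁ + B₀ ≤ H₀ + K₁)
    (h₁₀ : A₁ + B₀ ≤ H₁ + K₀) :
    (a ⊔ b) * A₁ + (1 - a ⊔ b) * A₀ + ((a ⊓ b) * B₁ + (1 - a ⊓ b) * B₀) ≤
      a * H₁ + (1 - a) * H₀ + (b * K₁ + (1 - b) * K₀) := by
  rcases le_total a b with hab | hba
  · rw [sup_eq_right.2 hab, inf_eq_left.2 hab]
    linarith [mul_le_mul_of_nonneg_left h₁₁ ha.1, mul_le_mul_of_nonneg_left h₀₀ (sub_nonneg.2 hb.2),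
      mul_le_mul_of_nonneg_left h₀₁ (sub_nonneg.2 hab)]
  · rw [sup_eq_left.2 hba, inf_eq_right.2 hba]
    linarith [mul_le_mul_of_nonneg_left h₁₁ hb.1, mul_le_mul_of_nonneg_left h₀₀ (sub_nonneg.2 ha.2),
      mul_le_mul_of_nonneg_left h₁₀ (sub_nonneg.2 hba)]

theorem multilinearExt_sup_add_inf_le {N : ℕ} {f g h k : (Fin N → Bool) → ℝ}
    (hfghk : ∀ x y, f (x ⊔ y) + g (x ⊓ y) ≤ h x + k y) {p q : Fin N → ℝ}
    (hp : p ∈ Set.Icc 0 1) (hq : q ∈ Set.Icc 0 1) :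
    multilinearExt f (p ⊔ q) + multilinearExt g (p ⊓ q) ≤
      multilinearExt h p + multilinearExt k q := by
  induction N with
  | zero => simpa [multilinearExt_fin_zero] using hfghk Fin.elim0 Fin.elim0
  | succ N ih =>
    have hp' : p ∘ Fin.succ ∈ Set.Icc 0 1 := ⟨fun i => hp.1 i.succ, fun i => hp.2 i.succ⟩
    have hq' : q ∘ Fin.succ ∈ Set.Icc 0 1 := ⟨fun i => hq.1 i.succ, fun i => hq.2 i.succ⟩
    have I : ∀ u v : Bool,
        multilinearExt (fun x => f (Fin.cons (u ⊔ v) x)) ((p ⊔ q) ∘ Fin.succ) +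
            multilinearExt (fun x => g (Fin.cons (u ⊓ v) x)) ((p ⊓ q) ∘ Fin.succ) ≤
          multilinearExt (fun x => h (Fin.cons u x)) (p ∘ Fin.succ) +
            multilinearExt (fun x => k (Fin.cons v x)) (q ∘ Fin.succ) := by
      intro u v
      refine ih (fun x y => ?_) hp' hq'
      simpa only [Fin.cons_sup_cons, Fin.cons_inf_cons] using hfghk (Fin.cons u x) (Fin.cons v y)
    have I₁₁ := I true true
    have I₀₀ := I false false
    have I₀₁ := I false true
    have I₁₀ := I true false
    simp only [Bool.sup_eq_bor, Bool.inf_eq_band, Bool.or_true, Bool.or_false, Bool.and_true,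
      Bool.and_false] at I₁₁ I₀₀ I₀₁ I₁₀
    rw [multilinearExt_succ f, multilinearExt_succ g, multilinearExt_succ h, multilinearExt_succ k]
    rw [Pi.sup_apply, Pi.inf_apply]
    exact convex_mix_le ⟨hp.1 0, hp.2 0⟩ ⟨hq.1 0, hq.2 0⟩ I₁₁ I₀₀ I₀₁ I₁₀

section MultilinearExt

variable {N : ℕ} {f : (Fin N → Bool) → ℝ} {p q : Fin N → ℝ}

lemma multilinearExt_zero (p : Fin N → ℝ) : multilinearExt (fun _ => 0) p = 0 := by
  simp [multilinearExt]

lemma multilinearExt_nonneg (hf : ∀ x, 0 ≤ f x) (hp : p ∈ Set.Icc 0 1) :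
    0 ≤ multilinearExt f p := by
  simpa [multilinearExt_zero] using
    multilinearExt_sup_add_inf_le (f := fun _ => 0) (g := fun _ => 0) (h := fun _ => 0)
      (fun _ y => by simpa using hf y) hp hp

lemma multilinearExt_mono (hf : Monotone f) (hp : p ∈ Set.Icc 0 1) (hq : q ∈ Set.Icc 0 1)
    (hpq : p ≤ q) : multilinearExt f p ≤ multilinearExt f q := by
  simpa [multilinearExt_zero, inf_eq_left.2 hpq] using
    multilinearExt_sup_add_inf_le (f := fun _ => 0) (h := fun _ => 0)
      (fun x y => by simpa using hf (inf_le_right : x ⊓ y ≤ y)) hp hq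

variable {ρ : Fin N → Bool → ℝ}

lemma armwise_mem_Icc (hρ01 : ∀ i b, ρ i b ∈ Set.Icc 0 1) (a : Fin N → Bool) :
    (fun i => ρ i (a i)) ∈ Set.Icc 0 1 :=
  ⟨fun i => (hρ01 i (a i)).1, fun i => (hρ01 i (a i)).2⟩

lemma Monotone.multilinearExt_comp (hf : Monotone f) (hρ : ∀ i, Monotone (ρ i))
    (hρ01 : ∀ i b, ρ i b ∈ Set.Icc 0 1) :
    Monotone (fun a : Fin N → Bool => multilinearExt f (fun i => ρ i (a i))) := fun _ _ hab =>
  multilinearExt_mono hf (armwise_mem_Icc hρ01 _) (armwise_mem_Icc hρ01 _) fun i => hρ i (hab i)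

lemma Submod.multilinearExt_comp (hf : Submod f) (hρ : ∀ i, Monotone (ρ i))
    (hρ01 : ∀ i b, ρ i b ∈ Set.Icc 0 1) :
    Submod (fun a : Fin N → Bool => multilinearExt f (fun i => ρ i (a i))) := by
  intro a b
  have hsup : (fun i => ρ i ((a ⊔ b) i)) = (fun i => ρ i (a i)) ⊔ fun i => ρ i (b i) :=
    funext fun i => (hρ i).map_sup (a i) (b i)
  have hinf : (fun i => ρ i ((a ⊓ b) i)) = (fun i => ρ i (a i)) ⊓ fun i => ρ i (b i) :=
    funext fun i => (hρ i).map_inf (a i) (b i)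
  simpa only [hsup, hinf] using
    multilinearExt_sup_add_inf_le hf (armwise_mem_Icc hρ01 a) (armwise_mem_Icc hρ01 b)

end MultilinearExt

lemma sum_jointP_mul_eq_multilinearExt {N : ℕ} {P : Fin N → Bool → Bool → Bool → ℝ}
    (hPsum : ∀ i σ α, P i σ α false + P i σ α true = 1) (s a : Fin N → Bool)
    (V : (Fin N → Bool) → ℝ) :
    ∑ s', jointP P s a s' * V s' = multilinearExt V (fun i => P i (s i) (a i) true) := by
  unfold jointP multilinearExt
  refine sum_congr rfl fun s' _ => congrArg (· * V s') (prod_congr rfl fun i _ => ?_)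
  cases s' i
  · simp only [Bool.false_eq_true, if_false]
    linarith [hPsum i (s i) (a i)]
  · rfl

lemma ind_union {N : ℕ} (A B : Finset (Fin N)) : ind (A ∪ B) = ind A ⊔ ind B := by
  ext i; simp [ind]

lemma ind_inter {N : ℕ} (A B : Finset (Fin N)) : ind (A ∩ B) = ind A ⊓ ind B := by
  ext i; simp [ind]

lemma ind_mono {N : ℕ} : Monotone (ind (N := N)) := fun _ _ hAB i => by
  simpa [ind, Bool.le_iff_imp] using @hAB i

lemma ind_filter {N : ℕ} (a : Fin N → Bool) : ind (univ.filter (a · = true)) = a := by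
  ext i; simp [ind]

lemma card_filter_eq_pulls {N : ℕ} (a : Fin N → Bool) :
    (univ.filter (a · = true)).card = pulls a :=
  card_filter _ _

section Greedy

variable {N : ℕ} (G : Finset (Fin N) → ℝ)

lemma greedy_subset_greedy_succ (k : ℕ) : greedy G k ⊆ greedy G (k + 1) := by
  rw [greedy]
  split
  · exact subset_insert _ _
  · exact subset_rfl

lemma insert_le_greedy_succ {k : ℕ} {j : Fin N} (hj : j ∉ greedy G k) :
    G (insert j (greedy G k)) ≤ G (greedy G (k + 1)) := by
  have hne : (univ \ greedy G k).Nonempty := ⟨j, mem_sdiff.2 ⟨mem_univ j, hj⟩⟩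
  rw [greedy, dif_pos hne]
  exact (Classical.choose_spec (exists_max_image (univ \ greedy G k)
    (fun i => G (insert i (greedy G k))) hne)).2 j (mem_sdiff.2 ⟨mem_univ j, hj⟩)

variable {G}

lemma le_add_sum_marginal (hsub : ∀ A B, G (A ∪ B) + G (A ∩ B) ≤ G A + G B) (A S : Finset (Fin N)) :
    G (A ∪ S) ≤ G A + ∑ j ∈ S, (G (insert j A) - G A) := by
  induction S using Finset.induction_on with
  | empty => simp
  | @insert j S hj ih =>
    have hunion : insert j A ∪ (A ∪ S) = A ∪ insert j S := by
      ext; simp only [mem_union, mem_insert]; tauto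
    have hinter : insert j A ∩ (A ∪ S) = A := by
      ext x; simp only [mem_inter, mem_insert, mem_union]
      constructor
      · rintro ⟨rfl | hx, hx' | hx'⟩ <;> tauto
      · tauto
    have := hsub (insert j A) (A ∪ S)
    rw [hunion, hinter] at this
    rw [sum_insert hj]
    linarith

lemma sub_greedy_succ_le (hmono : Monotone G)
    (hsub : ∀ A B, G (A ∪ B) + G (A ∩ B) ≤ G A + G B) {K : ℕ} (hK : 1 ≤ K)
    {B : Finset (Fin N)} (hB : #B ≤ K) (k : ℕ) :
    G B - G (greedy G (k + 1)) ≤ (1 - 1 / K) * (G B - G (greedy G k)) := by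
  set A := greedy G k
  set δ := G (greedy G (k + 1)) - G A
  have hδ : 0 ≤ δ := sub_nonneg.2 (hmono (greedy_subset_greedy_succ G k))
  have hmarg : ∀ j ∈ B, G (insert j A) - G A ≤ δ := by
    intro j _
    by_cases hj : j ∈ A
    · rwa [insert_eq_of_mem hj, sub_self]
    · exact sub_le_sub_right (insert_le_greedy_succ G hj) _
  have hgap : G B - G A ≤ K * δ := calc
    G B - G A ≤ G (A ∪ B) - G A := sub_le_sub_right (hmono subset_union_right) _
    _ ≤ ∑ j ∈ B, (G (insert j A) - G A) := by linarith [le_add_sum_marginal hsub A B]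
    _ ≤ #B * δ := by simpa using sum_le_card_nsmul B _ δ hmarg
    _ ≤ K * δ := mul_le_mul_of_nonneg_right (by exact_mod_cast hB) hδ
  have hKpos : (0 : ℝ) < K := by exact_mod_cast hK
  have : (G B - G A) / K ≤ δ := by rw [div_le_iff₀ hKpos]; linarith
  calc G B - G (greedy G (k + 1)) = (G B - G A) - δ := by ring
    _ ≤ (G B - G A) - (G B - G A) / K := by linarith
    _ = (1 - 1 / K) * (G B - G A) := by ring

lemma sub_greedy_le_pow (hmono : Monotone G)
    (hsub : ∀ A B, G (A ∪ B) + G (A ∩ B) ≤ G A + G B) {K : ℕ} (hK : 1 ≤ K)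
    {B : Finset (Fin N)} (hB : #B ≤ K) (k : ℕ) :
    G B - G (greedy G k) ≤ (1 - 1 / K) ^ k * (G B - G ∅) := by
  induction k with
  | zero => simp [greedy]
  | succ k ih =>
    have hratio : (0 : ℝ) ≤ 1 - 1 / K :=
      sub_nonneg.2 ((div_le_one (by exact_mod_cast hK)).2 (by exact_mod_cast hK))
    calc G B - G (greedy G (k + 1)) ≤ (1 - 1 / K) * (G B - G (greedy G k)) :=
          sub_greedy_succ_le hmono hsub hK hB k
      _ ≤ (1 - 1 / K) * ((1 - 1 / K) ^ k * (G B - G ∅)) := mul_le_mul_of_nonneg_left ih hratio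
      _ = (1 - 1 / K) ^ (k + 1) * (G B - G ∅) := by ring

theorem one_sub_inv_exp_mul_le_greedy (hmono : Monotone G)
    (hsub : ∀ A B, G (A ∪ B) + G (A ∩ B) ≤ G A + G B) (hG₀ : 0 ≤ G ∅) {K : ℕ} (hK : 1 ≤ K)
    {B : Finset (Fin N)} (hB : #B ≤ K) :
    (1 - (Real.exp 1)⁻¹) * G B ≤ G (greedy G K) := by
  have hpow : (1 - 1 / (K : ℝ)) ^ K ≤ (Real.exp 1)⁻¹ := by
    simpa [Real.exp_neg] using Real.one_sub_div_pow_le_exp_neg (n := K) (t := 1)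
      (by exact_mod_cast hK)
  have hgap : 0 ≤ G B - G ∅ := sub_nonneg.2 (hmono (empty_subset B))
  have he : 0 ≤ (Real.exp 1)⁻¹ := inv_nonneg.2 (Real.exp_pos 1).le
  nlinarith [sub_greedy_le_pow hmono hsub hK hB K, mul_le_mul_of_nonneg_right hpow hgap,
    mul_nonneg he hG₀]

end Greedy

theorem stmt_7_general {N : ℕ} (γ : ℝ) (hγ0 : 0 ≤ γ)
    (K : ℕ) (hK1 : 1 ≤ K)
    (P : Fin N → Bool → Bool → Bool → ℝ)
    (hPnonneg : ∀ i σ α σ', 0 ≤ P i σ α σ')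
    (hPsum : ∀ i σ α, P i σ α false + P i σ α true = 1)
    (hPmono : ∀ i σ, P i σ false true ≤ P i σ true true)
    (s : Fin N → Bool)
    (R : (Fin N → Bool) → (Fin N → Bool) → ℝ)
    (hRmono : Monotone (R s)) (hRsub : Submod (R s)) (hRpos : ∀ a, 0 ≤ R s a)
    (V : (Fin N → Bool) → ℝ)
    (hVmono : Monotone V) (hVsub : Submod V) (hVpos : ∀ s', 0 ≤ V s')
    (Q : (Fin N → Bool) → ℝ)
    (hQ : Q = fun a => R s a + γ * ∑ s' : Fin N → Bool, jointP P s a s' * V s') :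
    ∀ a : Fin N → Bool, pulls a ≤ K →
      (1 - (Real.exp 1)⁻¹) * Q a ≤ Q (ind (greedy (fun A => Q (ind A)) K)) := by
  intro a ha
  set ρ : Fin N → Bool → ℝ := fun i b => P i (s i) b true
  have hρ : ∀ i, Monotone (ρ i) := fun i => Bool.monotone_of_false_le_true (hPmono i (s i))
  have hρ01 : ∀ i b, ρ i b ∈ Set.Icc 0 1 := fun i b =>
    ⟨hPnonneg i (s i) b true, by linarith [hPsum i (s i) b, hPnonneg i (s i) b false]⟩
  have hQρ : Q = fun b => R s b + γ * multilinearExt V (fun i => ρ i (b i)) := by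
    simp only [hQ, sum_jointP_mul_eq_multilinearExt hPsum, ρ]
  have hQmono : Monotone Q :=
    hQρ ▸ hRmono.add ((hVmono.multilinearExt_comp hρ hρ01).const_mul hγ0)
  have hQsub : Submod Q := hQρ ▸ hRsub.add_mul (hVsub.multilinearExt_comp hρ hρ01) hγ0
  have hQ₀ : 0 ≤ Q (ind ∅) := by
    rw [hQρ]
    exact add_nonneg (hRpos _)
      (mul_nonneg hγ0 (multilinearExt_nonneg hVpos (armwise_mem_Icc hρ01 _)))
  have hB : #(univ.filter (a · = true)) ≤ K := (card_filter_eq_pulls a).trans_le ha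
  simpa only [ind_filter] using one_sub_inv_exp_mul_le_greedy (G := fun A => Q (ind A))
    (hQmono.comp ind_mono)
    (fun A B => by simpa only [ind_union, ind_inter] using hQsub (ind A) (ind B)) hQ₀ hK1 hB

/-- The greedy action computed on the Bellman backup `Q` of a monotone, submodular,
nonnegative continuation value is a `(1 - 1/e)`-approximation of the best
budget-feasible action. -/
theorem stmt_7 {N : ℕ} (hN : 1 ≤ N) (γ : ℝ) (hγ0 : 0 ≤ γ) (hγ1 : γ < 1)
    (K : ℕ) (hK1 : 1 ≤ K) (hKN : K ≤ N)
    (P : Fin N → Bool → Bool → Bool → ℝ)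
    (hPnonneg : ∀ i σ α σ', 0 ≤ P i σ α σ')
    (hPsum : ∀ i σ α, P i σ α false + P i σ α true = 1)
    (hPmono : ∀ i σ, P i σ false true ≤ P i σ true true)
    (s : Fin N → Bool)
    (R : (Fin N → Bool) → (Fin N → Bool) → ℝ)
    (hRmono : Monotone (R s)) (hRsub : Submod (R s)) (hRpos : ∀ a, 0 ≤ R s a)
    (V : (Fin N → Bool) → ℝ)
    (hVmono : Monotone V) (hVsub : Submod V) (hVpos : ∀ s', 0 ≤ V s')
    (Q : (Fin N → Bool) → ℝ)
    (hQ : Q = fun a => R s a + γ * ∑ s' : Fin N → Bool, jointP P s a s' * V s') :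
    ∀ a : Fin N → Bool, pulls a ≤ K →
      (1 - (Real.exp 1)⁻¹) * Q a ≤ Q (ind (greedy (fun A => Q (ind A)) K)) :=
  stmt_7_general γ hγ0 K hK1 P hPnonneg hPsum hPmono s R hRmono hRsub hRpos V hVmono hVsub hVpos Q
    hQ
end
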